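/- arXiv:1206.7077 — 2 statements merged into one kernel-verified Lean document; each statement's English description precedes it below -/
import Mathlib

section
/- Let (σₙ,τ₀ₙ,τ₁ₙ)_{n≥0} be an arbitrary sequence of triples of permutations in S₃, let i : ℕ → {0,1} be any sequence, and let k ∈ ℕ. Then Δ(i₀,i₁,…) is a singleton if and only if the intersection Δ(i_k,i_{k+1},…) formed from the shifted digit sequence m ↦ i_{m+k} together with the shifted sequence of triples m ↦ (σ_{m+k},τ₀,_{m+k},τ₁,_{m+k}) is a singleton. -/
open Matrix

noncomputable section

/-- `A₀ = ![![0,0,1],![1,0,0],![0,1,1]]`. -/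
def A0 : Matrix (Fin 3) (Fin 3) ℝ := !![0,0,1; 1,0,0; 0,1,1]
/-- `A₁ = ![![1,0,1],![0,1,0],![0,0,1]]`. -/
def A1 : Matrix (Fin 3) (Fin 3) ℝ := !![1,0,1; 0,1,0; 0,0,1]
/-- `B = ![![1,1,1],![0,1,1],![0,0,1]]`. -/
def Bm : Matrix (Fin 3) (Fin 3) ℝ := !![1,1,1; 0,1,1; 0,0,1]

/-- The permutation matrix of `ρ`: entry `(i,j)` is `1` iff `ρ i = j`.  In particular
`P (finRotate 3)`, the matrix of the cycle `(1 2 3)`, is `![![0,1,0],![0,0,1],![1,0,0]]`. -/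
def P (ρ : Equiv.Perm (Fin 3)) : Matrix (Fin 3) (Fin 3) ℝ := ρ.permMatrix ℝ

/-- The pair of TRIP matrices `F₀ = P_σ·A₀·P_{τ₀}`, `F₁ = P_σ·A₁·P_{τ₁}` of a triple
of permutations, as a function `Fin 2 → Matrix`. -/
def Fmat (σ τ0 τ1 : Equiv.Perm (Fin 3)) : Fin 2 → Matrix (Fin 3) (Fin 3) ℝ :=
  ![P σ * A0 * P τ0, P σ * A1 * P τ1]

/-- `prodMat G n = B · (G 0) · (G 1) ⋯ (G n)`. -/
def prodMat (G : ℕ → Matrix (Fin 3) (Fin 3) ℝ) (n : ℕ) : Matrix (Fin 3) (Fin 3) ℝ :=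
  Bm * ((List.range (n+1)).map G).prod

/-- The triangle `Δ(i₀,…,iₙ)`: the convex hull of the images under
`π(x₀,x₁,x₂) = (x₁/x₀, x₂/x₀)` of the three columns of `M`. -/
def tri (M : Matrix (Fin 3) (Fin 3) ℝ) : Set (ℝ × ℝ) :=
  convexHull ℝ {p | ∃ j : Fin 3, p = (M 1 j / M 0 j, M 2 j / M 0 j)}

/-- `Δ(i₀,i₁,…) = ⋂ₙ Δ(i₀,…,iₙ)`, for the sequence of matrices `G m = F_{i_m}`. -/
def DeltaInf (G : ℕ → Matrix (Fin 3) (Fin 3) ℝ) : Set (ℝ × ℝ) :=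
  ⋂ n : ℕ, tri (prodMat G n)

/-!
`Δ(i₀,…,iₙ)` is the picture under `π` of the cone `Mₙ ℝ³₊`. All the matrices involved are
nonnegative and invertible, so every nonzero vector of this cone has positive first coordinate,
and `Δ(i₀,i₁,…)` is a single point exactly when `⋂ₙ Mₙ ℝ³₊` is a single half-line. Dropping the
first digit replaces this cone by its image under the invertible matrix `B F₀ B⁻¹`, and
invertible linear maps send half-lines to half-lines.
-/

section HalfLine

variable {V W : Type*} [AddCommGroup V] [Module ℝ V] [AddCommGroup W] [Module ℝ W]

def halfLine (v : V) : Set V := (· • v) '' Set.Ici (0 : ℝ)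

def IsHalfLine (K : Set V) : Prop := ∃ v ≠ 0, K = halfLine v

lemma self_mem_halfLine (v : V) : v ∈ halfLine v :=
  ⟨1, Set.mem_Ici.mpr zero_le_one, one_smul ℝ v⟩

lemma LinearMap.image_halfLine (f : V →ₗ[ℝ] W) (v : V) : f '' halfLine v = halfLine (f v) := by
  simp only [halfLine, Set.image_image, map_smul]

lemma isHalfLine_image_iff {f : V →ₗ[ℝ] W} (hf : Function.Injective f) {K : Set V} :
    IsHalfLine (f '' K) ↔ IsHalfLine K := by
  constructor
  · rintro ⟨w, hw, hK⟩
    obtain ⟨v, -, rfl⟩ : w ∈ f '' K := hK ▸ self_mem_halfLine w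
    refine ⟨v, fun hv => hw (by rw [hv, map_zero]), Set.image_injective.mpr hf ?_⟩
    rw [hK, f.image_halfLine]
  · rintro ⟨v, hv, rfl⟩
    exact ⟨f v, (map_ne_zero_iff f hf).mpr hv, f.image_halfLine v⟩

end HalfLine

section PosCone

variable {l m n : Type*} [Fintype n]

def posCone (M : Matrix m n ℝ) : Set (m → ℝ) := M.mulVecLin '' Set.Ici 0

lemma convex_posCone (M : Matrix m n ℝ) : Convex ℝ (posCone M) :=
  (convex_Ici 0).linear_image _

lemma smul_mem_posCone {M : Matrix m n ℝ} {v : m → ℝ} (hv : v ∈ posCone M) {t : ℝ}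
    (ht : 0 ≤ t) : t • v ∈ posCone M := by
  obtain ⟨c, hc, rfl⟩ := hv
  exact ⟨t • c, Set.mem_Ici.mpr (smul_nonneg ht hc), map_smul _ _ _⟩

lemma posCone_mul [Fintype m] (M : Matrix l m ℝ) (N : Matrix m n ℝ) :
    posCone (M * N) = M.mulVecLin '' posCone N := by
  simp only [posCone, Set.image_image, Matrix.coe_mulVecLin, Matrix.mulVec_mulVec]

lemma posCone_mul_subset [Fintype m] (M : Matrix l m ℝ) {N : Matrix m n ℝ}
    (hN : ∀ i j, 0 ≤ N i j) : posCone (M * N) ⊆ posCone M := by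
  rw [posCone_mul]
  rintro _ ⟨_, ⟨c, hc, rfl⟩, rfl⟩
  exact ⟨N *ᵥ c, fun i => Finset.sum_nonneg fun j _ => mul_nonneg (hN i j) (hc j), rfl⟩

lemma pos_of_mem_posCone {M : Matrix m n ℝ} {i : m} (hM : ∀ j, 0 < M i j) {v : m → ℝ}
    (hv : v ∈ posCone M) (hv0 : v ≠ 0) : 0 < v i := by
  obtain ⟨c, hc, rfl⟩ := hv
  obtain ⟨j, hj⟩ : ∃ j, c j ≠ 0 := by
    by_contra! h
    exact hv0 (by rw [show c = 0 from funext h, map_zero])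
  exact Finset.sum_pos' (fun k _ => mul_nonneg (hM k).le (hc k))
    ⟨j, Finset.mem_univ j, mul_pos (hM j) ((hc j).lt_of_ne' hj)⟩

end PosCone

section Homogeneous

def homog : ℝ × ℝ →ᵃ[ℝ] (Fin 3 → ℝ) where
  toFun p := ![1, p.1, p.2]
  linear := LinearMap.pi ![0, LinearMap.fst ℝ ℝ ℝ, LinearMap.snd ℝ ℝ ℝ]
  map_vadd' p v := by ext i; fin_cases i <;> simp [add_comm]

def dehomog (u : Fin 3 → ℝ) : ℝ × ℝ := (u 1 / u 0, u 2 / u 0)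

lemma homog_ne_zero (p : ℝ × ℝ) : homog p ≠ 0 := fun h => one_ne_zero (congrFun h 0)

lemma dehomog_homog (p : ℝ × ℝ) : dehomog (homog p) = p := by simp [dehomog, homog]

lemma homog_injective : Function.Injective homog := Function.LeftInverse.injective dehomog_homog

lemma homog_dehomog {u : Fin 3 → ℝ} (hu : u 0 ≠ 0) : homog (dehomog u) = (u 0)⁻¹ • u := by
  ext i; fin_cases i <;> simp [homog, dehomog, hu, div_eq_inv_mul]

lemma dehomog_smul {t : ℝ} (ht : t ≠ 0) (u : Fin 3 → ℝ) : dehomog (t • u) = dehomog u := by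
  simp [dehomog, mul_div_mul_left _ _ ht]

lemma mem_tri_iff {M : Matrix (Fin 3) (Fin 3) ℝ} (hM : ∀ j, 0 < M 0 j) {p : ℝ × ℝ} :
    p ∈ tri M ↔ homog p ∈ posCone M := by
  have hcol : ∀ j, homog (dehomog (Mᵀ j)) = (M 0 j)⁻¹ • Mᵀ j :=
    fun j => homog_dehomog (hM j).ne'
  constructor
  · refine fun hp => convexHull_min ?_ ((convex_posCone M).affine_preimage homog) hp
    rintro _ ⟨j, rfl⟩
    refine ⟨Pi.single j (M 0 j)⁻¹, ?_, ?_⟩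
    · exact Pi.single_nonneg.2 (inv_nonneg.2 (hM j).le)
    · change M.mulVecLin _ = homog (dehomog (Mᵀ j))
      rw [hcol, Matrix.mulVecLin_apply, Matrix.mulVec_single, op_smul_eq_smul]
      rfl
  · rintro ⟨c, hc, hMc⟩
    apply homog_injective.mem_set_image.mp
    rw [tri, homog.image_convexHull]
    refine mem_convexHull_of_exists_fintype (fun j => c j * M 0 j)
      (fun j => homog (dehomog (Mᵀ j))) (fun j => mul_nonneg (hc j) (hM j).le) ?_
      (fun j => ⟨_, ⟨j, rfl⟩, rfl⟩) ?_
    · simpa [homog, Matrix.mulVec, dotProduct, mul_comm] using congrFun hMc 0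
    · simp only [hcol, smul_smul, mul_assoc, mul_inv_cancel₀ (hM _).ne', mul_one]
      rw [← hMc, Matrix.mulVecLin_apply, Matrix.mulVec_eq_sum]
      simp only [op_smul_eq_smul]

lemma exists_homog_preimage_eq_singleton_iff {K : Set (Fin 3 → ℝ)}
    (hsmul : ∀ v ∈ K, ∀ t : ℝ, 0 ≤ t → t • v ∈ K) (hpos : ∀ v ∈ K, v ≠ 0 → 0 < v 0) :
    (∃ q, homog ⁻¹' K = {q}) ↔ IsHalfLine K := by
  constructor
  · rintro ⟨q, hq⟩
    have hqK : homog q ∈ K := show q ∈ homog ⁻¹' K from hq ▸ rfl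
    refine ⟨homog q, homog_ne_zero q, Set.Subset.antisymm (fun v hv => ?_) ?_⟩
    · rcases eq_or_ne v 0 with rfl | hv0
      · exact ⟨0, Set.self_mem_Ici, zero_smul _ _⟩
      have h0 := hpos v hv hv0
      have hq' : dehomog v = q := by
        rw [← Set.mem_singleton_iff, ← hq, Set.mem_preimage, homog_dehomog h0.ne']
        exact hsmul v hv _ (inv_nonneg.2 h0.le)
      refine ⟨v 0, h0.le, ?_⟩
      dsimp only
      rw [← hq', homog_dehomog h0.ne', smul_inv_smul₀ h0.ne']
    · rintro _ ⟨t, ht, rfl⟩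
      exact hsmul _ hqK t ht
  · rintro ⟨v, hv, rfl⟩
    have h0 := hpos v (self_mem_halfLine v) hv
    refine ⟨dehomog v, Set.eq_singleton_iff_unique_mem.2 ⟨?_, ?_⟩⟩
    · rw [Set.mem_preimage, homog_dehomog h0.ne']
      exact ⟨_, inv_nonneg.2 h0.le, rfl⟩
    · rintro p ⟨t, -, ht⟩
      have htne : t ≠ 0 := by
        rintro rfl
        exact homog_ne_zero p (ht ▸ zero_smul ℝ v)
      rw [← dehomog_homog p, ← ht, dehomog_smul htne]

end Homogeneous

section NonnegUnit

variable {n : Type*} [Fintype n] [DecidableEq n]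

structure IsNonnegUnit (M : Matrix n n ℝ) : Prop where
  nonneg : ∀ i j, 0 ≤ M i j
  isUnit : IsUnit M

lemma IsNonnegUnit.mul {M N : Matrix n n ℝ} (hM : IsNonnegUnit M) (hN : IsNonnegUnit N) :
    IsNonnegUnit (M * N) :=
  ⟨fun i j => Finset.sum_nonneg fun k _ => mul_nonneg (hM.nonneg i k) (hN.nonneg k j),
    hM.isUnit.mul hN.isUnit⟩

lemma IsNonnegUnit.exists_pos {M : Matrix n n ℝ} (hM : IsNonnegUnit M) (j : n) :
    ∃ i, 0 < M i j := by
  by_contra! h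
  refine ((Matrix.isUnit_iff_isUnit_det M).1 hM.isUnit).ne_zero ?_
  exact Matrix.det_eq_zero_of_column_eq_zero j fun i => le_antisymm (h i) (hM.nonneg i j)

lemma IsNonnegUnit.mul_apply_pos {m : Type*} {M : Matrix m n ℝ} {N : Matrix n n ℝ}
    (hN : IsNonnegUnit N) {i : m} (hM : ∀ k, 0 < M i k) (j : n) : 0 < (M * N) i j := by
  obtain ⟨k, hk⟩ := hN.exists_pos j
  exact Finset.sum_pos' (fun l _ => mul_nonneg (hM l).le (hN.nonneg l j))
    ⟨k, Finset.mem_univ k, mul_pos (hM k) hk⟩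

lemma isNonnegUnit_permMatrix (ρ : Equiv.Perm n) : IsNonnegUnit (ρ.permMatrix ℝ) := by
  refine ⟨fun i j => ?_, (Matrix.isUnit_iff_isUnit_det _).2 ?_⟩
  · simp only [Equiv.Perm.permMatrix, PEquiv.toMatrix_apply]
    split_ifs <;> norm_num
  · rw [Matrix.det_permutation]
    rcases Int.units_eq_one_or (Equiv.Perm.sign ρ) with h | h <;> simp [h]

end NonnegUnit

lemma isNonnegUnit_A0 : IsNonnegUnit A0 := by
  refine ⟨fun i j => ?_, (Matrix.isUnit_iff_isUnit_det _).2 ?_⟩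
  · fin_cases i <;> fin_cases j <;> simp [A0]
  · simp [A0, Matrix.det_fin_three]

lemma isNonnegUnit_A1 : IsNonnegUnit A1 := by
  refine ⟨fun i j => ?_, (Matrix.isUnit_iff_isUnit_det _).2 ?_⟩
  · fin_cases i <;> fin_cases j <;> simp [A1]
  · simp [A1, Matrix.det_fin_three]

lemma isNonnegUnit_Fmat (σ τ0 τ1 : Equiv.Perm (Fin 3)) (d : Fin 2) :
    IsNonnegUnit (Fmat σ τ0 τ1 d) := by
  fin_cases d
  · exact ((isNonnegUnit_permMatrix σ).mul isNonnegUnit_A0).mul (isNonnegUnit_permMatrix τ0)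
  · exact ((isNonnegUnit_permMatrix σ).mul isNonnegUnit_A1).mul (isNonnegUnit_permMatrix τ1)

lemma isUnit_det_Bm : IsUnit Bm.det := by
  simp [Bm, Matrix.det_fin_three]

lemma prodMat_zero (G : ℕ → Matrix (Fin 3) (Fin 3) ℝ) : prodMat G 0 = Bm * G 0 := by
  simp [prodMat]

lemma prodMat_succ (G : ℕ → Matrix (Fin 3) (Fin 3) ℝ) (n : ℕ) :
    prodMat G (n + 1) = prodMat G n * G (n + 1) := by
  rw [prodMat, prodMat, List.range_succ, List.map_append, List.prod_append, Matrix.mul_assoc]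
  simp

lemma prodMat_succ_eq_conj_mul (G : ℕ → Matrix (Fin 3) (Fin 3) ℝ) (n : ℕ) :
    prodMat G (n + 1) = Bm * G 0 * Bm⁻¹ * prodMat (fun m => G (m + 1)) n := by
  rw [prodMat, prodMat, List.range_succ_eq_map, List.map_cons, List.map_map, List.prod_cons,
    Matrix.mul_assoc _ Bm⁻¹, ← Matrix.mul_assoc Bm⁻¹, Matrix.nonsing_inv_mul _ isUnit_det_Bm,
    Matrix.one_mul, Matrix.mul_assoc]
  rfl

lemma prodMat_row_zero_pos {G : ℕ → Matrix (Fin 3) (Fin 3) ℝ} (hG : ∀ m, IsNonnegUnit (G m))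
    (n : ℕ) (j : Fin 3) : 0 < prodMat G n 0 j := by
  induction n generalizing j with
  | zero =>
    exact prodMat_zero G ▸ (hG 0).mul_apply_pos (fun k => by fin_cases k <;> simp [Bm]) j
  | succ n ih => exact prodMat_succ G n ▸ (hG (n + 1)).mul_apply_pos ih j

def posConeInf (G : ℕ → Matrix (Fin 3) (Fin 3) ℝ) : Set (Fin 3 → ℝ) :=
  ⋂ n, posCone (prodMat G n)

section PosConeInf

variable {G : ℕ → Matrix (Fin 3) (Fin 3) ℝ}

lemma homog_preimage_posConeInf (hG : ∀ m, IsNonnegUnit (G m)) :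
    homog ⁻¹' posConeInf G = DeltaInf G := by
  ext p
  simp only [Set.mem_preimage, posConeInf, DeltaInf, Set.mem_iInter,
    mem_tri_iff (prodMat_row_zero_pos hG _)]

lemma exists_deltaInf_eq_singleton_iff (hG : ∀ m, IsNonnegUnit (G m)) :
    (∃ q, DeltaInf G = {q}) ↔ IsHalfLine (posConeInf G) := by
  rw [← homog_preimage_posConeInf hG]
  refine exists_homog_preimage_eq_singleton_iff (fun v hv t ht => ?_) fun v hv => ?_
  · exact Set.mem_iInter.2 fun n => smul_mem_posCone (Set.mem_iInter.1 hv n) ht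
  · exact pos_of_mem_posCone (prodMat_row_zero_pos hG 0) (Set.mem_iInter.1 hv 0)

lemma isHalfLine_posConeInf_succ_iff (hG : ∀ m, IsNonnegUnit (G m)) :
    IsHalfLine (posConeInf fun m => G (m + 1)) ↔ IsHalfLine (posConeInf G) := by
  set C := Bm * G 0 * Bm⁻¹
  have hB : IsUnit Bm := (Matrix.isUnit_iff_isUnit_det Bm).2 isUnit_det_Bm
  have hC : Function.Injective C.mulVecLin := by
    rw [Matrix.coe_mulVecLin, Matrix.mulVec_injective_iff_isUnit]
    exact (hB.mul (hG 0).isUnit).mul (Matrix.isUnit_nonsing_inv_iff.2 hB)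
  have hanti : Antitone fun n => posCone (prodMat G n) :=
    antitone_nat_of_succ_le fun n => prodMat_succ G n ▸ posCone_mul_subset _ (hG _).nonneg
  have hshift : posConeInf G = C.mulVecLin '' posConeInf fun m => G (m + 1) := by
    rw [posConeInf, ← hanti.iInter_nat_add 1, posConeInf, hC.injOn.image_iInter_eq]
    simp only [prodMat_succ_eq_conj_mul, posCone_mul, C]
  rw [hshift, isHalfLine_image_iff hC]

lemma isHalfLine_posConeInf_add_iff (hG : ∀ m, IsNonnegUnit (G m)) (k : ℕ) :
    IsHalfLine (posConeInf fun m => G (m + k)) ↔ IsHalfLine (posConeInf G) := by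
  induction k with
  | zero => rfl
  | succ k ih =>
    rw [← ih, ← isHalfLine_posConeInf_succ_iff fun m => hG (m + k)]
    simp only [add_assoc, add_comm 1 k]

end PosConeInf

/-- The intersection `Δ(i₀,i₁,…)` (for a Combo TRIP map given by a sequence of triples
of permutations) is a singleton iff the intersection `Δ(i_k,i_{k+1},…)` formed from the
shifted digit sequence and shifted sequence of triples is a singleton. -/
theorem singleton_iff_shift_singleton
    (σ τ0 τ1 : ℕ → Equiv.Perm (Fin 3)) (i : ℕ → Fin 2) (k : ℕ) :
    (∃ q : ℝ × ℝ, DeltaInf (fun m => Fmat (σ m) (τ0 m) (τ1 m) (i m)) = {q}) ↔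
    (∃ q : ℝ × ℝ,
      DeltaInf (fun m => Fmat (σ (m + k)) (τ0 (m + k)) (τ1 (m + k)) (i (m + k))) = {q}) := by
  have hG : ∀ m, IsNonnegUnit (Fmat (σ m) (τ0 m) (τ1 m) (i m)) :=
    fun m => isNonnegUnit_Fmat _ _ _ _
  rw [exists_deltaInf_eq_singleton_iff hG, exists_deltaInf_eq_singleton_iff fun m => hG (m + k)]
  exact (isHalfLine_posConeInf_add_iff hG k).symm
end
end

section
/- Fix a triple (σ,τ₀,τ₁) of permutations in S₃ and a purely periodic sequence i : ℕ → {0,1} with period p ≥ 1 (i_{m+p} = i_m for all m). Let N = (B·F_{i₀}·F_{i₁}⋯F_{i_{p−1}}·B⁻¹)². Then the intersection Δ(i₀,i₁,…) contains a line segment of positive length if and only if there exist two distinct points p₁, p₂ in the closed triangle Δ̄ = {(x,y) ∈ ℝ² : 0 ≤ y ≤ x ≤ 1} and real numbers λ₁, λ₂ such that N·(1,p₁)ᵀ = λ₁·(1,p₁)ᵀ and N·(1,p₂)ᵀ = λ₂·(1,p₂)ᵀ, where (1,p) denotes the column vector in ℝ³ obtained by prepending 1 to the coordinates of p. -/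
open Matrix

noncomputable section

/-!
Let `Q` be the product of the `p` matrices of one period, a nonnegative integer matrix with
`|det Q| = 1`, and `M = B Q B⁻¹`. The triangles `Δ(i₀,…,i_{kp-1})` are the triangles of
`M ^ k * B = B Q ^ k`, so `Δ(i₀,i₁,…)` is the nested intersection `K` of the triangles of
`M ^ k * B`. Since `Q` is not a permutation matrix, the entries of `Q ^ k` are unbounded, and the
area of the triangle of `M ^ k * B`, being `|det| / ∏ (first row)`, tends to `0`: `K` is a point
or a segment. The projective action of `M` is a bijection of `K` mapping segments into
segments, so if `K = [u, w]` it fixes or swaps `u` and `w`, and `(1, u)`, `(1, w)` are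
eigenvectors of `M²`. Conversely, an eigenvector `(1, q)` of `M²` with `q` in the base
triangle stays in every triangle of `M ^ (2k) * B`, hence lies in the convex set `K`.
-/

open Set

def homCoord (q : ℝ × ℝ) : Fin 3 → ℝ := ![1, q.1, q.2]

def proj (v : Fin 3 → ℝ) : ℝ × ℝ := (v 1 / v 0, v 2 / v 0)

@[simp] lemma homCoord_zero (q : ℝ × ℝ) : homCoord q 0 = 1 := rfl
@[simp] lemma homCoord_one (q : ℝ × ℝ) : homCoord q 1 = q.1 := rfl
@[simp] lemma homCoord_two (q : ℝ × ℝ) : homCoord q 2 = q.2 := rfl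

lemma homCoord_add (a b : ℝ) (x y : ℝ × ℝ) (hab : a + b = 1) :
    homCoord (a • x + b • y) = a • homCoord x + b • homCoord y := by
  ext i
  fin_cases i <;> simp [homCoord, hab]

@[simp] lemma proj_homCoord (q : ℝ × ℝ) : proj (homCoord q) = q := by
  simp [proj, homCoord]

lemma proj_smul {c : ℝ} (hc : c ≠ 0) (v : Fin 3 → ℝ) : proj (c • v) = proj v := by
  simp [proj, mul_div_mul_left _ _ hc]

lemma homCoord_proj {v : Fin 3 → ℝ} (hv : v 0 ≠ 0) :
    homCoord (proj v) = (v 0)⁻¹ • v := by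
  ext i
  fin_cases i <;> simp [homCoord, proj, hv, div_eq_inv_mul]

lemma proj_add_mem_segment {v w : Fin 3 → ℝ} (hv : 0 < v 0) (hw : 0 < w 0) {a b : ℝ}
    (ha : 0 ≤ a) (hb : 0 ≤ b) (hab : a + b = 1) :
    proj (a • v + b • w) ∈ segment ℝ (proj v) (proj w) := by
  have hc : 0 < a * v 0 + b * w 0 := by
    rcases ha.lt_or_eq with ha | rfl
    · positivity
    · simp only [zero_add] at hab; simp [hab, hw]
  refine ⟨a * v 0 / (a * v 0 + b * w 0), b * w 0 / (a * v 0 + b * w 0), by positivity,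
    by positivity, by field_simp, ?_⟩
  simp only [proj, Prod.smul_mk, Prod.mk_add_mk, Pi.add_apply, Pi.smul_apply, smul_eq_mul]
  congr 1 <;> field_simp

lemma mem_tri_iff_s9 {X : Matrix (Fin 3) (Fin 3) ℝ} (hX : ∀ j, 0 < X 0 j) {q : ℝ × ℝ} :
    q ∈ tri X ↔ ∃ s, 0 ≤ s ∧ X *ᵥ s = homCoord q := by
  have hvert : ∀ j,
      X *ᵥ Pi.single j (X 0 j)⁻¹ = homCoord (X 1 j / X 0 j, X 2 j / X 0 j) := by
    intro j
    have : (X 1 j / X 0 j, X 2 j / X 0 j) = proj (Xᵀ j) := rfl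
    rw [this, homCoord_proj (hX j).ne', Matrix.mulVec_single]
    ext i; simp [mul_comm]
  constructor
  · refine fun hq => convexHull_min (t := {q | ∃ s, 0 ≤ s ∧ X *ᵥ s = homCoord q}) ?_ ?_ hq
    · rintro _ ⟨j, rfl⟩
      exact ⟨_, Pi.single_nonneg.2 (inv_nonneg.2 (hX j).le), hvert j⟩
    · rintro x ⟨s, hs, hxs⟩ y ⟨t, ht, hyt⟩ a b ha hb hab
      refine ⟨a • s + b • t, by positivity, ?_⟩
      rw [homCoord_add a b x y hab, Matrix.mulVec_add, Matrix.mulVec_smul, Matrix.mulVec_smul,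
        hxs, hyt]
  · rintro ⟨s, hs, hXs⟩
    have hrow : ∀ r, ∑ j, X r j * s j = homCoord q r := fun r => congrFun hXs r
    refine mem_convexHull_of_exists_fintype (fun j => X 0 j * s j)
      (fun j => (X 1 j / X 0 j, X 2 j / X 0 j)) (fun j => mul_nonneg (hX j).le (hs j))
      (hrow 0) (fun j => ⟨j, rfl⟩) ?_
    have h1 := hrow 1
    have h2 := hrow 2
    simp only [homCoord_one, homCoord_two] at h1 h2
    ext <;> simp only [Prod.fst_sum, Prod.snd_sum, Prod.smul_mk, smul_eq_mul]
    · rw [← h1]; refine Finset.sum_congr rfl fun j _ => ?_; field_simp [(hX j).ne']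
    · rw [← h2]; refine Finset.sum_congr rfl fun j _ => ?_; field_simp [(hX j).ne']

lemma mulVec_nonneg {m n : Type*} [Fintype n] {Y : Matrix m n ℝ} (hY : ∀ i j, 0 ≤ Y i j)
    {s : n → ℝ} (hs : 0 ≤ s) : 0 ≤ Y *ᵥ s :=
  fun i => Finset.sum_nonneg (s := Finset.univ) fun j _ => mul_nonneg (hY i j) (hs j)

lemma pow_mulVec_eq_smul {n : Type*} [Fintype n] [DecidableEq n] {A : Matrix n n ℝ}
    {v : n → ℝ} {l : ℝ} (h : A *ᵥ v = l • v) (k : ℕ) :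
    (A ^ k) *ᵥ v = l ^ k • v := by
  induction k with
  | zero => simp
  | succ k ih =>
    rw [pow_succ', ← Matrix.mulVec_mulVec, ih, Matrix.mulVec_smul, h, smul_smul, pow_succ]

lemma tri_mul_subset {X Y : Matrix (Fin 3) (Fin 3) ℝ} (hX : ∀ j, 0 < X 0 j)
    (hXY : ∀ j, 0 < (X * Y) 0 j) (hY : ∀ i j, 0 ≤ Y i j) : tri (X * Y) ⊆ tri X := by
  intro q hq
  obtain ⟨s, hs, hXYs⟩ := (mem_tri_iff_s9 hXY).1 hq
  exact (mem_tri_iff_s9 hX).2 ⟨Y *ᵥ s, mulVec_nonneg hY hs, by rw [Matrix.mulVec_mulVec, hXYs]⟩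

lemma isCompact_tri (X : Matrix (Fin 3) (Fin 3) ℝ) : IsCompact (tri X) :=
  ((Set.finite_range fun j => (X 1 j / X 0 j, X 2 j / X 0 j)).subset
    (by rintro _ ⟨j, rfl⟩; exact ⟨j, rfl⟩)).isCompact_convexHull (𝕜 := ℝ)

lemma convex_tri (X : Matrix (Fin 3) (Fin 3) ℝ) : Convex ℝ (tri X) := convex_convexHull ℝ _

lemma proj_mulVec_mem_tri {X : Matrix (Fin 3) (Fin 3) ℝ} (hX : ∀ j, 0 < X 0 j)
    {s : Fin 3 → ℝ} (hs : 0 ≤ s) (hs0 : s ≠ 0) :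
    0 < (X *ᵥ s) 0 ∧ proj (X *ᵥ s) ∈ tri X := by
  obtain ⟨j, hj⟩ : ∃ j, 0 < s j := by
    by_contra! h
    exact hs0 (funext fun j => le_antisymm (h j) (hs j))
  have hpos : 0 < (X *ᵥ s) 0 := Finset.sum_pos' (fun i _ => mul_nonneg (hX i).le (hs i))
    ⟨j, Finset.mem_univ j, mul_pos (hX j) hj⟩
  refine ⟨hpos, (mem_tri_iff_s9 hX).2
    ⟨((X *ᵥ s) 0)⁻¹ • s, smul_nonneg (inv_nonneg.2 hpos.le) hs, ?_⟩⟩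
  rw [Matrix.mulVec_smul, homCoord_proj hpos.ne']

lemma ne_zero_of_mulVec_eq_homCoord {X : Matrix (Fin 3) (Fin 3) ℝ} {s : Fin 3 → ℝ}
    {q : ℝ × ℝ} (h : X *ᵥ s = homCoord q) : s ≠ 0 := by
  rintro rfl
  simpa using congrFun h 0

lemma mul_le_one_of_mulVec_eq_homCoord {X : Matrix (Fin 3) (Fin 3) ℝ} (hX : ∀ j, 0 ≤ X 0 j)
    {s : Fin 3 → ℝ} (hs : 0 ≤ s) {q : ℝ × ℝ} (h : X *ᵥ s = homCoord q) (j : Fin 3) :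
    s j * X 0 j ≤ 1 := by
  have h0 : ∑ i, X 0 i * s i = 1 := congrFun h 0
  rw [mul_comm, ← h0]
  exact Finset.single_le_sum (f := fun i => X 0 i * s i) (fun i _ => mul_nonneg (hX i) (hs i))
    (Finset.mem_univ j)

lemma abs_det_homCoord_mul_prod_le {X : Matrix (Fin 3) (Fin 3) ℝ} (hX : ∀ j, 0 < X 0 j)
    {a b z : ℝ × ℝ} (ha : a ∈ tri X) (hb : b ∈ tri X) (hz : z ∈ tri X) :
    |(Matrix.of ![homCoord a, homCoord b, homCoord z]).det| * ∏ j, X 0 j ≤ 6 * |X.det| := by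
  obtain ⟨sa, hsa, ha⟩ := (mem_tri_iff_s9 hX).1 ha
  obtain ⟨sb, hsb, hb⟩ := (mem_tri_iff_s9 hX).1 hb
  obtain ⟨sz, hsz, hz⟩ := (mem_tri_iff_s9 hX).1 hz
  set S := Matrix.of ![sa, sb, sz]
  have hfac : Matrix.of ![homCoord a, homCoord b, homCoord z] = S * Xᵀ := by
    ext r c
    fin_cases r <;> simp [S, ← ha, ← hb, ← hz, Matrix.mul_apply, Matrix.mulVec, dotProduct,
      mul_comm]
  have hbound : |(S * Matrix.diagonal (X 0)).det| ≤ 6 := by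
    have := Matrix.det_le (abv := AbsoluteValue.abs) (x := 1) (A := S * Matrix.diagonal (X 0))
      fun r j => by
        have hle : ∀ s : Fin 3 → ℝ, 0 ≤ s → ∀ q : ℝ × ℝ, X *ᵥ s = homCoord q →
            |s j * X 0 j| ≤ 1 := fun s hs q h => by
          rw [abs_of_nonneg (mul_nonneg (hs j) (hX j).le)]
          exact mul_le_one_of_mulVec_eq_homCoord (fun i => (hX i).le) hs h j
        rw [Matrix.mul_diagonal]
        fin_cases r
        exacts [hle sa hsa a ha, hle sb hsb b hb, hle sz hsz z hz]
    simpa [Nat.factorial, Finset.abs_prod] using this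
  rw [Matrix.det_mul, Matrix.det_diagonal] at hbound
  calc _ = |S.det * ∏ j, X 0 j| * |X.det| := by
        rw [hfac, Matrix.det_mul, Matrix.det_transpose, abs_mul, abs_mul,
          abs_of_pos (Finset.prod_pos fun j _ => hX j)]
        ring
    _ ≤ 6 * |X.det| := mul_le_mul_of_nonneg_right hbound (abs_nonneg _)

lemma mem_range_lineMap_of_det_eq_zero {a b z : ℝ × ℝ} (hab : a ≠ b)
    (h : (Matrix.of ![homCoord a, homCoord b, homCoord z]).det = 0) :
    z ∈ range (AffineMap.lineMap a b : ℝ → ℝ × ℝ) := by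
  have hcross : (b.1 - a.1) * (z.2 - a.2) = (b.2 - a.2) * (z.1 - a.1) := by
    rw [Matrix.det_fin_three] at h
    simp [homCoord] at h
    linarith
  simp only [mem_range, AffineMap.lineMap_apply_module, Prod.ext_iff, Prod.fst_add,
    Prod.snd_add, Prod.smul_fst, Prod.smul_snd, smul_eq_mul]
  by_cases h1 : b.1 = a.1
  · have h2 : b.2 - a.2 ≠ 0 := fun h2 => hab (Prod.ext h1.symm (by linarith))
    rw [h1, sub_self, zero_mul, eq_comm, mul_eq_zero] at hcross
    have hz : z.1 = a.1 := sub_eq_zero.1 (hcross.resolve_left h2)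
    refine ⟨(z.2 - a.2) / (b.2 - a.2), ?_, ?_⟩
    · rw [h1, hz]; ring
    · field_simp; ring
  · have h1 : b.1 - a.1 ≠ 0 := sub_ne_zero.2 h1
    refine ⟨(z.1 - a.1) / (b.1 - a.1), ?_, ?_⟩
    · field_simp; ring
    · field_simp; linear_combination -hcross

section Segments

variable {E : Type*}

lemma eq_and_eq_or_of_mem_segment [AddCommGroup E] [Module ℝ E] {u w x y : E} (huw : u ≠ w)
    (hx : x ∈ segment ℝ u w) (hy : y ∈ segment ℝ u w) (hu : u ∈ segment ℝ x y)
    (hw : w ∈ segment ℝ x y) : x = u ∧ y = w ∨ x = w ∧ y = u := by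
  have hinj := AffineMap.lineMap_injective ℝ huw
  rw [segment_eq_image_lineMap] at hx hy
  obtain ⟨a, ⟨ha0, ha1⟩, rfl⟩ := hx
  obtain ⟨b, ⟨hb0, hb1⟩, rfl⟩ := hy
  have h0 : (0 : ℝ) ∈ uIcc a b := by
    rw [← segment_eq_uIcc, ← hinj.mem_set_image, image_segment, AffineMap.lineMap_apply_zero]
    exact hu
  have h1 : (1 : ℝ) ∈ uIcc a b := by
    rw [← segment_eq_uIcc, ← hinj.mem_set_image, image_segment, AffineMap.lineMap_apply_one]
    exact hw
  rw [mem_uIcc] at h0 h1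
  have key : a = 0 ∧ b = 1 ∨ a = 1 ∧ b = 0 := by
    rcases h0 with h0 | h0 <;> rcases h1 with h1 | h1
    all_goals first
      | exact .inl ⟨by linarith, by linarith⟩
      | exact .inr ⟨by linarith, by linarith⟩
  rcases key with ⟨rfl, rfl⟩ | ⟨rfl, rfl⟩ <;> simp

lemma exists_eq_segment_of_subset_range_lineMap [NormedAddCommGroup E] [NormedSpace ℝ E]
    {K : Set E} {x y : E} (hK : IsCompact K) (hKc : Convex ℝ K) (hxy : x ≠ y) (hx : x ∈ K)
    (hy : y ∈ K) (hline : K ⊆ range (AffineMap.lineMap x y : ℝ → E)) :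
    ∃ u w, u ≠ w ∧ K = segment ℝ u w := by
  set f : ℝ →ᵃ[ℝ] E := AffineMap.lineMap x y
  set I := f ⁻¹' K
  have hIc : IsCompact I := by
    have : I = (fun t : ℝ => t • (y - x)) ⁻¹' ((· + x) ⁻¹' K) := by
      ext t; simp [I, f, AffineMap.lineMap_apply]
    rw [this]
    exact (isClosedEmbedding_smul_left (sub_ne_zero.2 hxy.symm)).isCompact_preimage
      ((Homeomorph.addRight x).isCompact_preimage.2 hK)
  have h0 : (0 : ℝ) ∈ I := by simpa [I, f] using hx
  have h1 : (1 : ℝ) ∈ I := by simpa [I, f] using hy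
  have hα := hIc.sInf_mem ⟨0, h0⟩
  have hβ := hIc.sSup_mem ⟨0, h0⟩
  have hαβ : sInf I < sSup I :=
    (csInf_le hIc.bddBelow h0).trans_lt (zero_lt_one.trans_le (le_csSup hIc.bddAbove h1))
  have hI : I = segment ℝ (sInf I) (sSup I) := by
    refine (Subset.antisymm (fun t ht => ?_) ((hKc.affine_preimage f).segment_subset hα hβ))
    rw [segment_eq_Icc hαβ.le]
    exact ⟨csInf_le hIc.bddBelow ht, le_csSup hIc.bddAbove ht⟩
  refine ⟨f (sInf I), f (sSup I), (AffineMap.lineMap_injective ℝ hxy).ne hαβ.ne, ?_⟩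
  rw [← image_segment, ← hI, image_preimage_eq_of_subset hline]

end Segments

def projMap (M : Matrix (Fin 3) (Fin 3) ℝ) (q : ℝ × ℝ) : ℝ × ℝ :=
  proj (M *ᵥ homCoord q)

section ProjMap

variable {M : Matrix (Fin 3) (Fin 3) ℝ}

lemma mulVec_homCoord_eq_smul {q : ℝ × ℝ} (hq : (M *ᵥ homCoord q) 0 ≠ 0) :
    M *ᵥ homCoord q = (M *ᵥ homCoord q) 0 • homCoord (projMap M q) := by
  rw [projMap, homCoord_proj hq, smul_inv_smul₀ hq]

lemma projMap_mem_segment {x y z : ℝ × ℝ} (hx : 0 < (M *ᵥ homCoord x) 0)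
    (hy : 0 < (M *ᵥ homCoord y) 0) (hz : z ∈ segment ℝ x y) :
    projMap M z ∈ segment ℝ (projMap M x) (projMap M y) := by
  obtain ⟨a, b, ha, hb, hab, rfl⟩ := hz
  simp only [projMap]
  rw [homCoord_add a b x y hab, Matrix.mulVec_add, Matrix.mulVec_smul,
    Matrix.mulVec_smul]
  exact proj_add_mem_segment hx hy ha hb hab

lemma projMap_inv_projMap (hM : IsUnit M.det) {q : ℝ × ℝ} (hq : (M *ᵥ homCoord q) 0 ≠ 0) :
    projMap M⁻¹ (projMap M q) = q := by
  rw [projMap, projMap, homCoord_proj hq, Matrix.mulVec_smul, Matrix.mulVec_mulVec,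
    Matrix.nonsing_inv_mul _ hM, Matrix.one_mulVec, proj_smul (inv_ne_zero hq), proj_homCoord]

lemma exists_sq_mulVec_homCoord_eq_smul {q : ℝ × ℝ} (h₁ : (M *ᵥ homCoord q) 0 ≠ 0)
    (h₂ : (M *ᵥ homCoord (projMap M q)) 0 ≠ 0) (h : projMap M (projMap M q) = q) :
    ∃ l : ℝ, (M ^ 2) *ᵥ homCoord q = l • homCoord q := by
  obtain ⟨c₁, e₁⟩ : ∃ c : ℝ, M *ᵥ homCoord q = c • homCoord (projMap M q) :=
    ⟨_, mulVec_homCoord_eq_smul h₁⟩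
  obtain ⟨c₂, e₂⟩ : ∃ c : ℝ, M *ᵥ homCoord (projMap M q) = c • homCoord q :=
    ⟨_, by rw [mulVec_homCoord_eq_smul h₂, h]⟩
  exact ⟨c₁ * c₂, by
    rw [pow_two, ← Matrix.mulVec_mulVec, e₁, Matrix.mulVec_smul, e₂, smul_smul]⟩

end ProjMap

def limitTri (M V : Matrix (Fin 3) (Fin 3) ℝ) : Set (ℝ × ℝ) := ⋂ k, tri (M ^ k * V)

section LimitTri

variable {M V : Matrix (Fin 3) (Fin 3) ℝ}

lemma isCompact_limitTri : IsCompact (limitTri M V) :=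
  (isCompact_tri (M ^ 0 * V)).of_isClosed_subset
    (isClosed_iInter fun _ => (isCompact_tri _).isClosed) (iInter_subset _ 0)

lemma convex_limitTri : Convex ℝ (limitTri M V) := convex_iInter fun _ => convex_tri _

lemma limitTri_subset_tri : limitTri M V ⊆ tri V := fun _ hq => by
  simpa using mem_iInter.1 hq 0

lemma projMap_mem_tri (hpos : ∀ k j, 0 < (M ^ k * V) 0 j) {k : ℕ} {q : ℝ × ℝ}
    (hq : q ∈ tri (M ^ k * V)) :
    0 < (M *ᵥ homCoord q) 0 ∧ projMap M q ∈ tri (M ^ (k + 1) * V) := by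
  obtain ⟨s, hs, hXs⟩ := (mem_tri_iff_s9 (hpos k)).1 hq
  have : M *ᵥ homCoord q = (M ^ (k + 1) * V) *ᵥ s := by
    rw [← hXs, Matrix.mulVec_mulVec, pow_succ', Matrix.mul_assoc]
  rw [projMap, this]
  exact proj_mulVec_mem_tri (hpos (k + 1)) hs (ne_zero_of_mulVec_eq_homCoord hXs)

lemma exists_projMap_eq (hpos : ∀ k j, 0 < (M ^ k * V) 0 j) {k : ℕ} {q' : ℝ × ℝ}
    (hq' : q' ∈ tri (M ^ (k + 1) * V)) : ∃ q ∈ tri (M ^ k * V), projMap M q = q' := by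
  obtain ⟨s, hs, hXs⟩ := (mem_tri_iff_s9 (hpos (k + 1))).1 hq'
  obtain ⟨hv, hq⟩ := proj_mulVec_mem_tri (hpos k) hs (ne_zero_of_mulVec_eq_homCoord hXs)
  refine ⟨_, hq, ?_⟩
  rw [projMap, homCoord_proj hv.ne', Matrix.mulVec_smul, Matrix.mulVec_mulVec, ← Matrix.mul_assoc,
    ← pow_succ', hXs, proj_smul (inv_ne_zero hv.ne'), proj_homCoord]

lemma mulVec_homCoord_pos (hpos : ∀ k j, 0 < (M ^ k * V) 0 j) {q : ℝ × ℝ}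
    (hq : q ∈ limitTri M V) : 0 < (M *ᵥ homCoord q) 0 :=
  (projMap_mem_tri hpos (mem_iInter.1 hq 0)).1

lemma mapsTo_projMap (hpos : ∀ k j, 0 < (M ^ k * V) 0 j)
    (hnest : Antitone fun k => tri (M ^ k * V)) :
    MapsTo (projMap M) (limitTri M V) (limitTri M V) := fun _ hq =>
  mem_iInter.2 fun k => hnest k.le_succ (projMap_mem_tri hpos (mem_iInter.1 hq k)).2

/-- The preimages found at each level all coincide, because `projMap M⁻¹` is a
left inverse of `projMap M` on `tri V`. -/
lemma surjOn_projMap (hpos : ∀ k j, 0 < (M ^ k * V) 0 j)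
    (hnest : Antitone fun k => tri (M ^ k * V)) (hM : IsUnit M.det) :
    SurjOn (projMap M) (limitTri M V) (limitTri M V) := by
  intro q' hq'
  have hpre : ∀ k, ∃ q ∈ tri (M ^ k * V), projMap M q = q' := fun k =>
    exists_projMap_eq hpos (mem_iInter.1 hq' (k + 1))
  obtain ⟨q, hq, rfl⟩ := hpre 0
  refine ⟨q, mem_iInter.2 fun k => ?_, rfl⟩
  obtain ⟨r, hr, hrq⟩ := hpre k
  have hr0 : r ∈ tri (M ^ 0 * V) := hnest (Nat.zero_le k) hr
  rw [← projMap_inv_projMap hM (projMap_mem_tri hpos hq).1.ne', ← hrq,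
    projMap_inv_projMap hM (projMap_mem_tri hpos hr0).1.ne']
  exact hr

/-- The area of a triangle with vertices in `tri (M ^ k * V)` is at most
`6 |det V| / ∏ j, (M ^ k * V) 0 j`, which tends to zero. -/
lemma det_homCoord_eq_zero_of_mem_limitTri (hpos : ∀ k j, 0 < (M ^ k * V) 0 j)
    (hdet : |M.det| ≤ 1) (hgrow : ∀ c : ℝ, ∃ k, c ≤ ∏ j, (M ^ k * V) 0 j)
    {a b z : ℝ × ℝ} (ha : a ∈ limitTri M V) (hb : b ∈ limitTri M V) (hz : z ∈ limitTri M V) :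
    (Matrix.of ![homCoord a, homCoord b, homCoord z]).det = 0 := by
  by_contra h
  have hd := abs_pos.2 h
  obtain ⟨k, hk⟩ :=
    hgrow ((6 * |V.det| + 1) / |(Matrix.of ![homCoord a, homCoord b, homCoord z]).det|)
  rw [div_le_iff₀' hd] at hk
  have harea := abs_det_homCoord_mul_prod_le (hpos k) (mem_iInter.1 ha k) (mem_iInter.1 hb k)
    (mem_iInter.1 hz k)
  have hdetk : |(M ^ k * V).det| ≤ |V.det| := by
    rw [Matrix.det_mul, Matrix.det_pow, abs_mul, abs_pow]
    exact mul_le_of_le_one_left (abs_nonneg _) (pow_le_one₀ (abs_nonneg _) hdet)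
  linarith

lemma exists_limitTri_eq_segment (hpos : ∀ k j, 0 < (M ^ k * V) 0 j) (hdet : |M.det| ≤ 1)
    (hgrow : ∀ c : ℝ, ∃ k, c ≤ ∏ j, (M ^ k * V) 0 j) {x y : ℝ × ℝ} (hxy : x ≠ y)
    (hseg : segment ℝ x y ⊆ limitTri M V) :
    ∃ u w, u ≠ w ∧ limitTri M V = segment ℝ u w := by
  have hx := hseg (left_mem_segment ℝ x y)
  have hy := hseg (right_mem_segment ℝ x y)
  exact exists_eq_segment_of_subset_range_lineMap isCompact_limitTri convex_limitTri hxy hx hy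
    fun z hz => mem_range_lineMap_of_det_eq_zero hxy
      (det_homCoord_eq_zero_of_mem_limitTri hpos hdet hgrow hx hy hz)

/-- `projMap M` is a bijection of the segment `limitTri M V` which maps subsegments into
subsegments, so it fixes or swaps the two endpoints. -/
lemma exists_sq_mulVec_eq_smul_of_limitTri_eq_segment (hpos : ∀ k j, 0 < (M ^ k * V) 0 j)
    (hnest : Antitone fun k => tri (M ^ k * V)) (hM : IsUnit M.det) {u w : ℝ × ℝ}
    (huw : u ≠ w) (hK : limitTri M V = segment ℝ u w) :
    (∃ l : ℝ, (M ^ 2) *ᵥ homCoord u = l • homCoord u) ∧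
      ∃ l : ℝ, (M ^ 2) *ᵥ homCoord w = l • homCoord w := by
  have hu : u ∈ limitTri M V := hK ▸ left_mem_segment ℝ u w
  have hw : w ∈ limitTri M V := hK ▸ right_mem_segment ℝ u w
  have hmaps := mapsTo_projMap hpos hnest
  have hsub : segment ℝ u w ⊆ segment ℝ (projMap M u) (projMap M w) := by
    intro z hz
    rw [← hK] at hz
    obtain ⟨y, hy, rfl⟩ := surjOn_projMap hpos hnest hM hz
    rw [hK] at hy
    exact projMap_mem_segment (mulVec_homCoord_pos hpos hu) (mulVec_homCoord_pos hpos hw) hy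
  have hTu := hmaps hu
  have hTw := hmaps hw
  rw [hK] at hTu hTw
  have hinv : projMap M (projMap M u) = u ∧ projMap M (projMap M w) = w := by
    rcases eq_and_eq_or_of_mem_segment huw hTu hTw (hsub (left_mem_segment ℝ u w))
      (hsub (right_mem_segment ℝ u w)) with ⟨h₁, h₂⟩ | ⟨h₁, h₂⟩ <;>
      simp [h₁, h₂]
  have hne : ∀ q ∈ limitTri M V, (M *ᵥ homCoord q) 0 ≠ 0 := fun q hq =>
    (mulVec_homCoord_pos hpos hq).ne'
  exact ⟨exists_sq_mulVec_homCoord_eq_smul (hne u hu) (hne _ (hmaps hu)) hinv.1,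
    exists_sq_mulVec_homCoord_eq_smul (hne w hw) (hne _ (hmaps hw)) hinv.2⟩

lemma mem_limitTri_of_pow_mulVec_eq_smul (hpos : ∀ k j, 0 < (M ^ k * V) 0 j)
    (hnest : Antitone fun k => tri (M ^ k * V)) {q : ℝ × ℝ} (hq : q ∈ tri V) {m : ℕ}
    (hm : 0 < m) {l : ℝ} (hE : (M ^ m) *ᵥ homCoord q = l • homCoord q) :
    q ∈ limitTri M V := by
  refine mem_iInter.2 fun k => hnest (Nat.le_mul_of_pos_left k hm) ?_
  obtain ⟨s, hs, hVs⟩ := (mem_tri_iff_s9 (by simpa using hpos 0)).1 hq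
  have hpow : (M ^ (m * k) * V) *ᵥ s = l ^ k • homCoord q := by
    rw [← Matrix.mulVec_mulVec, hVs, pow_mul, pow_mulVec_eq_smul hE]
  obtain ⟨hl, hmem⟩ := proj_mulVec_mem_tri (hpos (m * k)) hs (ne_zero_of_mulVec_eq_homCoord hVs)
  rw [hpow] at hl hmem
  rwa [proj_smul (by simpa using hl.ne'), proj_homCoord] at hmem

end LimitTri

lemma abs_det_list_prod {n : Type*} [Fintype n] [DecidableEq n] {L : List (Matrix n n ℝ)}
    (h : ∀ A ∈ L, |A.det| = 1) : |L.prod.det| = 1 :=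
  List.prod_induction (fun A : Matrix n n ℝ => |A.det| = 1)
    (fun A B hA hB => by rw [Matrix.det_mul, abs_mul, hA, hB, one_mul]) (by simp) h

lemma isUnit_of_abs_det_eq_one {n : Type*} [Fintype n] [DecidableEq n] {A : Matrix n n ℝ}
    (h : |A.det| = 1) : IsUnit A :=
  (Matrix.isUnit_iff_isUnit_det A).2 (isUnit_iff_ne_zero.2 fun h0 => by simp [h0] at h)

lemma List.prod_range_mul_of_periodic {α : Type*} [Monoid α] {f : ℕ → α} {p : ℕ}
    (hf : Function.Periodic f p) (k : ℕ) :
    ((List.range (k * p)).map f).prod = ((List.range p).map f).prod ^ k := by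
  induction k with
  | zero => simp
  | succ k ih =>
    rw [add_mul, one_mul, List.range_add, List.map_append, List.prod_append, ih, List.map_map,
      pow_succ]
    congr 2
    exact List.map_congr_left fun m _ => by
      show f (k * p + m) = f m
      rw [add_comm]
      exact hf.nat_mul k m

section NatMatrix

variable {n : Type*} [Fintype n]

lemma sum_sum_le_sum_sum_mul (Y : Matrix n n ℕ) {Z : Matrix n n ℕ} (hZ : ∀ i, Z i ≠ 0) :
    ∑ i, ∑ j, Y i j ≤ ∑ i, ∑ j, (Y * Z) i j := by
  have hrow : ∀ i, ∑ j, (Y * Z) i j = ∑ k, Y i k * ∑ j, Z k j := fun i => by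
    simp only [Matrix.mul_apply, Finset.mul_sum]
    exact Finset.sum_comm
  simp only [hrow]
  gcongr with i _ k _
  refine Nat.le_mul_of_pos_right _ (Nat.pos_of_ne_zero fun h0 => hZ k ?_)
  ext j
  exact (Finset.sum_eq_zero_iff.1 h0) j (Finset.mem_univ j)

variable [DecidableEq n]

abbrev natCastMat : Matrix n n ℕ →+* Matrix n n ℝ := (Nat.castRingHom ℝ).mapMatrix

lemma natCastMat_injective : Function.Injective (natCastMat : Matrix n n ℕ → Matrix n n ℝ) :=
  fun _ _ h => Matrix.map_injective Nat.cast_injective h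

lemma row_ne_zero_of_isUnit {Y : Matrix n n ℕ} (hY : IsUnit (natCastMat Y)) (i : n) :
    Y i ≠ 0 := by
  intro h
  have := (Matrix.isUnit_iff_isUnit_det _).1 hY
  rw [Matrix.det_eq_zero_of_row_eq_zero i fun j => by simpa using congrFun h j] at this
  exact not_isUnit_zero this

lemma col_ne_zero_of_isUnit {Y : Matrix n n ℕ} (hY : IsUnit (natCastMat Y)) (j : n) :
    Yᵀ j ≠ 0 := by
  intro h
  have := (Matrix.isUnit_iff_isUnit_det _).1 hY
  rw [Matrix.det_eq_zero_of_column_eq_zero j fun i => by simpa using congrFun h i] at this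
  exact not_isUnit_zero this

lemma not_isOfFinOrder_of_card_lt_sum {Q : Matrix n n ℕ} (hQ : IsUnit (natCastMat Q))
    (hsum : Fintype.card n < ∑ i, ∑ j, Q i j) : ¬IsOfFinOrder Q := by
  rw [isOfFinOrder_iff_pow_eq_one]
  rintro ⟨k, hk, hQk⟩
  obtain ⟨m, rfl⟩ := Nat.exists_eq_add_one_of_ne_zero hk.ne'
  have hle := sum_sum_le_sum_sum_mul Q (row_ne_zero_of_isUnit (Y := Q ^ m) (by
    rw [map_pow]; exact hQ.pow m))
  rw [← pow_succ', hQk] at hle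
  simp [Matrix.one_apply] at hle
  omega

/-- Pigeonhole: with bounded entries the powers `Q ^ k` would take finitely many values. -/
lemma exists_le_pow_apply {Q : Matrix n n ℕ} (hQ : IsUnit (natCastMat Q))
    (hQ' : ¬IsOfFinOrder Q) (c : ℕ) : ∃ k i j, c ≤ (Q ^ k) i j := by
  by_contra! h
  have hu : ¬IsOfFinOrder hQ.unit := fun hfin => by
    obtain ⟨m, hm, hpow⟩ := (Units.isOfFinOrder_val.2 hfin).exists_pow_eq_one
    refine hQ' (isOfFinOrder_iff_pow_eq_one.2 ⟨m, hm, natCastMat_injective ?_⟩)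
    rwa [map_pow, map_one, ← hQ.unit_spec]
  have hinj : Function.Injective fun k : ℕ => Q ^ k := fun a b hab =>
    injective_pow_iff_not_isOfFinOrder.2 hu <| Units.ext <| by
      simp only [Units.val_pow_eq_pow_val, IsUnit.unit_spec, ← map_pow]
      exact congrArg natCastMat hab
  refine Set.infinite_range_of_injective hinj ((Set.Finite.pi fun _ =>
    Set.Finite.pi fun _ => Set.finite_Iio c).subset ?_)
  rintro _ ⟨k, rfl⟩
  exact fun i _ j _ => h k i j

end NatMatrix

section Bm

lemma det_Bm : Bm.det = 1 := by
  simp [Bm, Matrix.det_fin_three]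

lemma isUnit_Bm : IsUnit Bm := isUnit_of_abs_det_eq_one (by simp [det_Bm])

lemma mem_tri_Bm {q : ℝ × ℝ} : q ∈ tri Bm ↔ 0 ≤ q.2 ∧ q.2 ≤ q.1 ∧ q.1 ≤ 1 := by
  rw [mem_tri_iff_s9 fun j => by fin_cases j <;> simp [Bm]]
  constructor
  · rintro ⟨s, hs, h⟩
    have h0 := congrFun h 0
    have h1 := congrFun h 1
    have h2 := congrFun h 2
    simp [Bm, Matrix.mulVec, dotProduct, Fin.sum_univ_three] at h0 h1 h2
    have : 0 ≤ s 0 := hs 0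
    have : 0 ≤ s 1 := hs 1
    have : 0 ≤ s 2 := hs 2
    refine ⟨by linarith, by linarith, by linarith⟩
  · rintro ⟨h1, h2, h3⟩
    refine ⟨![1 - q.1, q.1 - q.2, q.2], fun j => ?_, ?_⟩
    · fin_cases j <;> simp <;> linarith
    · ext i
      fin_cases i <;> simp [Bm, Matrix.mulVec, dotProduct, Fin.sum_univ_three, homCoord]

lemma Bm_mul_apply_zero (Y : Matrix (Fin 3) (Fin 3) ℕ) (j : Fin 3) :
    (Bm * natCastMat Y) 0 j = ∑ i, (Y i j : ℝ) := by
  simp [Bm, Matrix.mul_apply, Fin.sum_univ_three]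

lemma Bm_mul_pos {Y : Matrix (Fin 3) (Fin 3) ℕ} (hY : IsUnit (natCastMat Y)) (j : Fin 3) :
    0 < (Bm * natCastMat Y) 0 j := by
  obtain ⟨i, hi⟩ := Function.ne_iff.1 (col_ne_zero_of_isUnit hY j)
  rw [Bm_mul_apply_zero]
  exact Finset.sum_pos' (fun _ _ => Nat.cast_nonneg _)
    ⟨i, Finset.mem_univ i, Nat.cast_pos.2 (Nat.pos_of_ne_zero hi)⟩

lemma tri_Bm_mul_subset {Y Z : Matrix (Fin 3) (Fin 3) ℕ} (hY : IsUnit (natCastMat Y))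
    (hZ : IsUnit (natCastMat Z)) : tri (Bm * natCastMat (Y * Z)) ⊆ tri (Bm * natCastMat Y) := by
  have hYZ := Bm_mul_pos (Y := Y * Z) (by rw [map_mul]; exact hY.mul hZ)
  rw [map_mul, ← Matrix.mul_assoc] at hYZ ⊢
  exact tri_mul_subset (Bm_mul_pos hY) hYZ fun _ _ => Nat.cast_nonneg _

lemma Bm_conj_pow_mul_Bm (Q : Matrix (Fin 3) (Fin 3) ℕ) (k : ℕ) :
    (Bm * natCastMat Q * Bm⁻¹) ^ k * Bm = Bm * natCastMat (Q ^ k) := by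
  induction k with
  | zero => simp
  | succ k ih =>
    rw [pow_succ', Matrix.mul_assoc, ih, Matrix.mul_assoc, ← Matrix.mul_assoc Bm⁻¹,
      Matrix.nonsing_inv_mul _ (by simp [det_Bm]), Matrix.one_mul, Matrix.mul_assoc, ← map_mul,
      ← pow_succ']

variable {Q : Matrix (Fin 3) (Fin 3) ℕ}

lemma Bm_conj_pos (hQ : IsUnit (natCastMat Q)) (k : ℕ) (j : Fin 3) :
    0 < ((Bm * natCastMat Q * Bm⁻¹) ^ k * Bm) 0 j := by
  rw [Bm_conj_pow_mul_Bm]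
  exact Bm_mul_pos (by rw [map_pow]; exact hQ.pow k) j

lemma antitone_tri_Bm_conj (hQ : IsUnit (natCastMat Q)) :
    Antitone fun k => tri ((Bm * natCastMat Q * Bm⁻¹) ^ k * Bm) := by
  refine antitone_nat_of_succ_le fun k => ?_
  show tri (_ ^ (k + 1) * Bm) ⊆ tri (_ ^ k * Bm)
  rw [Bm_conj_pow_mul_Bm, Bm_conj_pow_mul_Bm, pow_succ]
  exact tri_Bm_mul_subset (by rw [map_pow]; exact hQ.pow k) hQ

lemma cast_le_prod_Bm_mul_apply_zero {Y : Matrix (Fin 3) (Fin 3) ℕ}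
    (hY : IsUnit (natCastMat Y)) (a b : Fin 3) :
    (Y a b : ℝ) ≤ ∏ j, (Bm * natCastMat Y) 0 j := by
  have hcol : ∀ j, 1 ≤ ∑ i, Y i j := fun j => Nat.one_le_iff_ne_zero.2 fun h0 =>
    col_ne_zero_of_isUnit hY j (funext fun i => Finset.sum_eq_zero_iff.1 h0 i (Finset.mem_univ i))
  have : Y a b ≤ ∏ j, ∑ i, Y i j :=
    (Finset.single_le_sum (fun i _ => Nat.zero_le _) (Finset.mem_univ a)).trans
      (Finset.single_le_prod' (fun j _ => hcol j) (Finset.mem_univ b))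
  simp only [Bm_mul_apply_zero]
  exact_mod_cast this

lemma Bm_conj_unbounded (hQ : IsUnit (natCastMat Q)) (hQ' : ¬IsOfFinOrder Q) (c : ℝ) :
    ∃ k, c ≤ ∏ j, ((Bm * natCastMat Q * Bm⁻¹) ^ k * Bm) 0 j := by
  obtain ⟨k, a, b, h⟩ := exists_le_pow_apply hQ hQ' ⌈c⌉₊
  refine ⟨k, ?_⟩
  rw [Bm_conj_pow_mul_Bm]
  exact (Nat.le_ceil c).trans ((Nat.cast_le.2 h).trans
    (cast_le_prod_Bm_mul_apply_zero (by rw [map_pow]; exact hQ.pow k) a b))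

end Bm

def A0nat : Matrix (Fin 3) (Fin 3) ℕ := !![0,0,1; 1,0,0; 0,1,1]
def A1nat : Matrix (Fin 3) (Fin 3) ℕ := !![1,0,1; 0,1,0; 0,0,1]

def Fnat (σ τ0 τ1 : Equiv.Perm (Fin 3)) : Fin 2 → Matrix (Fin 3) (Fin 3) ℕ :=
  ![σ.permMatrix ℕ * A0nat * τ0.permMatrix ℕ, σ.permMatrix ℕ * A1nat * τ1.permMatrix ℕ]

lemma sum_sum_permMatrix_mul_mul {n : Type*} [Fintype n] [DecidableEq n]
    (σ τ : Equiv.Perm n) (A : Matrix n n ℕ) :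
    ∑ i, ∑ j, (σ.permMatrix ℕ * A * τ.permMatrix ℕ) i j = ∑ i, ∑ j, A i j := by
  rw [PEquiv.toMatrix_toPEquiv_mul, PEquiv.mul_toMatrix_toPEquiv]
  simp only [Matrix.submatrix_apply, id]
  rw [Equiv.sum_comp σ fun i => ∑ j, A i (τ.symm j)]
  exact Finset.sum_congr rfl fun i _ => Equiv.sum_comp τ.symm (A i)

section Trip

variable (σ τ0 τ1 : Equiv.Perm (Fin 3))

lemma natCastMat_Fnat (d : Fin 2) : natCastMat (Fnat σ τ0 τ1 d) = Fmat σ τ0 τ1 d := by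
  have h0 : natCastMat A0nat = A0 := by
    ext i j; fin_cases i <;> fin_cases j <;> simp [A0nat, A0]
  have h1 : natCastMat A1nat = A1 := by
    ext i j; fin_cases i <;> fin_cases j <;> simp [A1nat, A1]
  have hP : ∀ ρ : Equiv.Perm (Fin 3), natCastMat (ρ.permMatrix ℕ) = P ρ := fun ρ =>
    PEquiv.map_toMatrix _ _
  fin_cases d
  · show natCastMat (σ.permMatrix ℕ * A0nat * τ0.permMatrix ℕ) = P σ * A0 * P τ0
    rw [map_mul, map_mul, hP, hP, h0]
  · show natCastMat (σ.permMatrix ℕ * A1nat * τ1.permMatrix ℕ) = P σ * A1 * P τ1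
    rw [map_mul, map_mul, hP, hP, h1]

lemma abs_det_Fmat (d : Fin 2) : |(Fmat σ τ0 τ1 d).det| = 1 := by
  fin_cases d <;> simp [Fmat, P, A0, A1, Matrix.det_fin_three, abs_unit_intCast]

lemma sum_sum_Fnat (d : Fin 2) : ∑ i, ∑ j, Fnat σ τ0 τ1 d i j = 4 := by
  fin_cases d <;> simp [Fnat, sum_sum_permMatrix_mul_mul] <;> decide

end Trip

def tripProd (σ τ0 τ1 : Equiv.Perm (Fin 3)) (i : ℕ → Fin 2) (n : ℕ) :
    Matrix (Fin 3) (Fin 3) ℕ :=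
  ((List.range n).map fun m => Fnat σ τ0 τ1 (i m)).prod

section TripProd

variable (σ τ0 τ1 : Equiv.Perm (Fin 3)) (i : ℕ → Fin 2)

lemma natCastMat_tripProd (n : ℕ) :
    natCastMat (tripProd σ τ0 τ1 i n) =
      ((List.range n).map fun m => Fmat σ τ0 τ1 (i m)).prod := by
  rw [tripProd, map_list_prod, List.map_map]
  exact congrArg List.prod (List.map_congr_left fun m _ => natCastMat_Fnat σ τ0 τ1 (i m))

lemma abs_det_tripProd (n : ℕ) : |(natCastMat (tripProd σ τ0 τ1 i n)).det| = 1 := by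
  rw [natCastMat_tripProd]
  exact abs_det_list_prod (by simp [abs_det_Fmat])

lemma isUnit_tripProd (n : ℕ) : IsUnit (natCastMat (tripProd σ τ0 τ1 i n)) :=
  isUnit_of_abs_det_eq_one (abs_det_tripProd σ τ0 τ1 i n)

lemma tripProd_succ (n : ℕ) :
    tripProd σ τ0 τ1 i (n + 1) = tripProd σ τ0 τ1 i n * Fnat σ τ0 τ1 (i n) := by
  rw [tripProd, List.range_succ, List.map_append, List.prod_append, List.map_singleton,
    List.prod_singleton, tripProd]

lemma tripProd_succ' (n : ℕ) :
    tripProd σ τ0 τ1 i (n + 1) =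
      Fnat σ τ0 τ1 (i 0) * tripProd σ τ0 τ1 (fun m => i (m + 1)) n := by
  rw [tripProd, List.range_succ_eq_map, List.map_cons, List.prod_cons, List.map_map]
  rfl

lemma tripProd_mul_of_periodic {p : ℕ} (hper : Function.Periodic i p) (k : ℕ) :
    tripProd σ τ0 τ1 i (k * p) = tripProd σ τ0 τ1 i p ^ k :=
  List.prod_range_mul_of_periodic (hper.comp (Fnat σ τ0 τ1)) k

/-- The period product is not a permutation matrix: its entries sum to at least
`4 = ∑ i j, A₀ i j = ∑ i j, A₁ i j`. -/
lemma not_isOfFinOrder_tripProd {p : ℕ} (hp : 0 < p) :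
    ¬IsOfFinOrder (tripProd σ τ0 τ1 i p) := by
  refine not_isOfFinOrder_of_card_lt_sum (isUnit_tripProd σ τ0 τ1 i p) ?_
  obtain ⟨p, rfl⟩ := Nat.exists_eq_add_one_of_ne_zero hp.ne'
  rw [tripProd_succ']
  refine lt_of_lt_of_le ?_ (sum_sum_le_sum_sum_mul _
    (row_ne_zero_of_isUnit (isUnit_tripProd σ τ0 τ1 (fun m => i (m + 1)) p)))
  simp [sum_sum_Fnat]

lemma antitone_tri_tripProd : Antitone fun n => tri (Bm * natCastMat (tripProd σ τ0 τ1 i n)) :=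
  antitone_nat_of_succ_le fun n => by
    show tri (Bm * natCastMat (tripProd σ τ0 τ1 i (n + 1))) ⊆ _
    rw [tripProd_succ]
    refine tri_Bm_mul_subset (isUnit_tripProd σ τ0 τ1 i n) ?_
    rw [natCastMat_Fnat]
    exact isUnit_of_abs_det_eq_one (abs_det_Fmat σ τ0 τ1 (i n))

lemma DeltaInf_eq_limitTri {p : ℕ} (hp : 0 < p) (hper : Function.Periodic i p) :
    DeltaInf (fun m => Fmat σ τ0 τ1 (i m)) =
      limitTri (Bm * natCastMat (tripProd σ τ0 τ1 i p) * Bm⁻¹) Bm := by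
  have hanti := antitone_tri_tripProd σ τ0 τ1 i
  calc DeltaInf (fun m => Fmat σ τ0 τ1 (i m))
      = ⋂ n, tri (Bm * natCastMat (tripProd σ τ0 τ1 i (n + 1))) := by
        simp only [DeltaInf, prodMat, natCastMat_tripProd]
    _ = ⋂ n, tri (Bm * natCastMat (tripProd σ τ0 τ1 i n)) :=
        hanti.iInter_comp_tendsto_atTop (Filter.tendsto_add_atTop_nat 1)
    _ = ⋂ k, tri (Bm * natCastMat (tripProd σ τ0 τ1 i (k * p))) :=
        (hanti.iInter_comp_tendsto_atTop <| Filter.tendsto_atTop_mono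
          (fun k => Nat.le_mul_of_pos_right k hp) Filter.tendsto_id).symm
    _ = limitTri (Bm * natCastMat (tripProd σ τ0 τ1 i p) * Bm⁻¹) Bm := by
        simp only [limitTri, Bm_conj_pow_mul_Bm, tripProd_mul_of_periodic σ τ0 τ1 i hper]

end TripProd

/-- Theorem 7.4 (eigenvector criterion): for a purely periodic digit sequence of period
`p`, the intersection `Δ(i₀,i₁,…)` contains a line segment of positive length iff the
matrix `N = (B·F_{i₀}⋯F_{i_{p−1}}·B⁻¹)²` has two eigenvectors of the form `(1,p₁)ᵀ`,
`(1,p₂)ᵀ` with `p₁ ≠ p₂` lying in the closed triangle `{0 ≤ y ≤ x ≤ 1}`. -/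
theorem segment_iff_two_eigenvectors
    (σ τ0 τ1 : Equiv.Perm (Fin 3)) (i : ℕ → Fin 2) (p : ℕ) (hp : 1 ≤ p)
    (hper : ∀ m, i (m + p) = i m) :
    (∃ q1 q2 : ℝ × ℝ, q1 ≠ q2 ∧
        segment ℝ q1 q2 ⊆ DeltaInf (fun m => Fmat σ τ0 τ1 (i m))) ↔
    (∃ q1 q2 : ℝ × ℝ, q1 ≠ q2 ∧
        (0 ≤ q1.2 ∧ q1.2 ≤ q1.1 ∧ q1.1 ≤ 1) ∧ (0 ≤ q2.2 ∧ q2.2 ≤ q2.1 ∧ q2.1 ≤ 1) ∧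
        ∃ l1 l2 : ℝ,
          ((Bm * ((List.range p).map (fun m => Fmat σ τ0 τ1 (i m))).prod * Bm⁻¹) ^ 2).mulVec
              ![1, q1.1, q1.2] = l1 • ![1, q1.1, q1.2] ∧
          ((Bm * ((List.range p).map (fun m => Fmat σ τ0 τ1 (i m))).prod * Bm⁻¹) ^ 2).mulVec
              ![1, q2.1, q2.2] = l2 • ![1, q2.1, q2.2]) := by
  have hQ := isUnit_tripProd σ τ0 τ1 i p
  have hpos := Bm_conj_pos hQ
  have hnest := antitone_tri_Bm_conj hQ
  have hdet : |(Bm * natCastMat (tripProd σ τ0 τ1 i p) * Bm⁻¹).det| = 1 := by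
    rw [Matrix.det_conj isUnit_Bm]
    exact abs_det_tripProd σ τ0 τ1 i p
  rw [← natCastMat_tripProd, DeltaInf_eq_limitTri σ τ0 τ1 i hp hper]
  constructor
  · rintro ⟨q1, q2, hne, hseg⟩
    obtain ⟨u, w, huw, hK⟩ := exists_limitTri_eq_segment hpos hdet.le
      (Bm_conj_unbounded hQ (not_isOfFinOrder_tripProd σ τ0 τ1 i hp)) hne hseg
    obtain ⟨⟨l1, h1⟩, l2, h2⟩ := exists_sq_mulVec_eq_smul_of_limitTri_eq_segment hpos hnest
      ((Matrix.isUnit_iff_isUnit_det _).1 (isUnit_of_abs_det_eq_one hdet)) huw hK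
    have hB : ∀ q ∈ segment ℝ u w, 0 ≤ q.2 ∧ q.2 ≤ q.1 ∧ q.1 ≤ 1 := fun q hq =>
      mem_tri_Bm.1 (limitTri_subset_tri (hK ▸ hq))
    exact ⟨u, w, huw, hB u (left_mem_segment ℝ u w), hB w (right_mem_segment ℝ u w), l1, l2,
      h1, h2⟩
  · rintro ⟨q1, q2, hne, hq1, hq2, l1, l2, h1, h2⟩
    exact ⟨q1, q2, hne, convex_limitTri.segment_subset
      (mem_limitTri_of_pow_mulVec_eq_smul hpos hnest (mem_tri_Bm.2 hq1) two_pos h1)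
      (mem_limitTri_of_pow_mulVec_eq_smul hpos hnest (mem_tri_Bm.2 hq2) two_pos h2)⟩
end
end
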